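/- If e and f are equivalent idempotents in a ring and e is infinite, then f is infinite. -/
import Mathlib

/-- Murray–von Neumann (algebraic) equivalence of elements of a ring. -/
def MvnEquiv {R : Type*} [Ring R] (e f : R) : Prop :=
  ∃ x y : R, e = x * y ∧ f = y * x

/-- The order on idempotents: `e ≤ f` iff `e * f = e` and `f * e = e`. -/
def IdemLE {R : Type*} [Ring R] (e f : R) : Prop :=
  e * f = e ∧ f * e = e

/-- An idempotent `e` is infinite if there is an idempotent `g` with
`e ~ g`, `g ≤ e` and `g ≠ e`. -/
def IsInfiniteIdem {R : Type*} [Ring R] (e : R) : Prop :=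
  ∃ g : R, IsIdempotentElem g ∧ MvnEquiv e g ∧ IdemLE g e ∧ g ≠ e

private lemma mulr {R : Type*} [Ring R] {a b c : R} (h : a * b = c) (z : R) :
    a * (b * z) = c * z := by rw [← mul_assoc, h]

/-- If `e` and `f` are equivalent idempotents in a ring and `e` is infinite,
then `f` is infinite. -/
theorem isInfiniteIdem_of_mvnEquiv {R : Type*} [Ring R] (e f : R)
    (he : IsIdempotentElem e) (hf : IsIdempotentElem f)
    (hef : MvnEquiv e f) (hinf : IsInfiniteIdem e) :
    IsInfiniteIdem f := by
  obtain ⟨x₀, y₀, hex, hfy⟩ := hef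
  obtain ⟨g, hg, ⟨u₀, v₀, heu, hgv⟩, ⟨hge, heg⟩, hgne⟩ := hinf
  have he' : e * e = e := he
  have hf' : f * f = f := hf
  have hg' : g * g = g := hg
  set x : R := e * x₀ * f with hxdef
  set y : R := f * y₀ * e with hydef
  set u : R := e * u₀ * g with hudef
  set v : R := g * v₀ * e with hvdef
  -- basic relations
  have hfy₀ : f * y₀ = y₀ * e := by rw [hfy, mul_assoc, ← hex]
  have hy₀e : y₀ * e = f * y₀ := hfy₀.symm
  have hgv₀ : g * v₀ = v₀ * e := by rw [hgv, mul_assoc, ← heu]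
  have hxy : x * y = e := by
    simp only [hxdef, hydef, mul_assoc, mulr hf', mulr hfy₀, mulr he',
      mulr hex.symm, he']
  have hyx : y * x = f := by
    simp only [hxdef, hydef, mul_assoc, mulr he', mulr hy₀e, mulr hf',
      mulr hfy.symm, hf']
  have huv : u * v = e := by
    simp only [hudef, hvdef, mul_assoc, mulr hg', mulr hgv₀, mulr he',
      mulr heu.symm, he']
  have hvu : v * u = g := by
    simp only [hudef, hvdef, mul_assoc, mulr he', mulr hgv₀.symm, mulr hg',
      mulr hgv.symm, hg']
  have hex' : e * x = x := by rw [hxdef, ← mul_assoc, ← mul_assoc, he']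
  have hxf : x * f = x := by rw [hxdef, mul_assoc, mul_assoc, hf', ← mul_assoc]
  have hfy' : f * y = y := by rw [hydef, ← mul_assoc, ← mul_assoc, hf']
  have hye : y * e = y := by rw [hydef, mul_assoc, mul_assoc, he', ← mul_assoc]
  have hue : u * e = u := by rw [hudef, mul_assoc, mul_assoc, hge, ← mul_assoc]
  have hve : v * e = v := by rw [hvdef, mul_assoc, mul_assoc, he', ← mul_assoc]
  refine ⟨y * g * x, ?_, ⟨y * u * x, y * v * x, ?_, ?_⟩, ⟨?_, ?_⟩, ?_⟩
  · show (y * g * x) * (y * g * x) = y * g * x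
    simp only [mul_assoc, mulr hxy, mulr hge, mulr heg, mulr hg', mulr he']
  · -- f = (y*u*x) * (y*v*x)
    simp only [mul_assoc, mulr hxy, mulr hue, mulr huv, hex', hyx]
  · -- y*g*x = (y*v*x)*(y*u*x)
    simp only [mul_assoc, mulr hxy, mulr hve, mulr hvu]
  · -- (y*g*x) * f = y*g*x
    simp only [mul_assoc, hxf]
  · -- f * (y*g*x) = y*g*x
    simp only [← mul_assoc, hfy']
  · intro h
    apply hgne
    have h1 : x * (y * g * x) * y = g := by
      simp only [mul_assoc, mulr hxy, mulr heg, mulr hge, hxy, heg, hge]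
    have h2 : x * f * y = e := by
      rw [← hyx]
      simp only [mul_assoc, mulr hxy, hxy, he']
    rw [h] at h1
    rw [h1] at h2
    exact h2.symm ▸ h2
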